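/- Let p be a prime, q a positive integer divisible by p, m ≥ 3, 0 ≤ δ < m, and let the sequences a^t_σ of length p^m be defined as in the stated construction. Then for every t ∈ {0,…,p^{k+δ}−1} and every integer τ with either 1 ≤ |τ| ≤ p^{m−δ}−1 or p^m − p^{m−δ} + 1 ≤ |τ| ≤ p^m − 1, the sum of aperiodic autocorrelations vanishes: Σ_{σ=0}^{p^k−1} A(a^t_σ)(τ) = 0. -/

import Mathlib

/-!
Pair each term `(σ, i)` of `Σ_σ A(a^t_σ)(τ)`, `τ > 0`, with `j = i + τ`. As `p^(m-δ) ∤ τ`, the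
indices `i` and `j` differ in one of their first `m - δ` digits; let `v = π_β(γ)` be the first
such position in chain order. Incrementing `σ_β` mod `p` (if `γ = 1`), or otherwise the common
digit of `i` and `j` at `π_β(γ - 1)`, is injective, keeps `v` and the digits there, and multiplies
the term by `ω_q^((q/p)(i_v - j_v)) ≠ 1`: in the exponent only the product `x_{π_β(γ-1)} x_v` of `g`
(resp. `σ_β x_{π_β(1)}`) changes differently at `i` and at `j`. So on each level set of this factor
the terms are permuted and rescaled by it, and sum to zero. Negative shifts are conjugates.
-/

open Finset

/-- `i`-th (1-based) base-`p` digit of `r`, i.e. `r_i` where `r = Σ_i r_i p^(i-1)`. -/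
def dig (p r i : ℕ) : ℕ := r / p ^ (i - 1) % p

/-- `ω_q^x = exp(2π√-1·x/q)` for `x ∈ ℤ_q`. -/
noncomputable def eomega (q : ℕ) (x : ZMod q) : ℂ :=
  Complex.exp (2 * Real.pi * Complex.I * (x.val : ℂ) / (q : ℂ))

/-- Aperiodic cross-correlation of two length-`N` `ℤ_q`-valued sequences at integer shift `τ`. -/
noncomputable def ccorr (q N : ℕ) (u v : ℕ → ZMod q) (τ : ℤ) : ℂ :=
  if 0 ≤ τ then ∑ i ∈ Finset.range (N - τ.toNat), eomega q (u i - v (i + τ.toNat))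
  else ∑ i ∈ Finset.range (N - (-τ).toNat), eomega q (u (i + (-τ).toNat) - v i)

/-- Aperiodic autocorrelation. -/
noncomputable def acorr (q N : ℕ) (u : ℕ → ZMod q) (τ : ℤ) : ℂ := ccorr q N u u τ

/-- Entry `a^t_{σ,r}` of the construction: with `(r_1,…,r_m)` the `p`-ary digits of `r`,
`a^t_σ(r) = (q/p) Σ_β Σ_γ r_{π_β(γ)} r_{π_β(γ+1)} + Σ_l λ_l r_l + λ_0
 + (q/p)(Σ_β σ_β r_{π_β(1)} + Σ_β t_β r_{π_β(m_β)} + Σ_β t_{k+β} r_{m-δ+β})`. -/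
def aseq (p q m δ k : ℕ) (mcard : ℕ → ℕ) (pmap : ℕ → ℕ → ℕ) (lam : ℕ → ZMod q)
    (t σ r : ℕ) : ZMod q :=
  (((q / p) * ∑ β ∈ Finset.Icc 1 k, ∑ γ ∈ Finset.Icc 1 (mcard β - 1),
      dig p r (pmap β γ) * dig p r (pmap β (γ + 1)) : ℕ) : ZMod q)
  + ∑ l ∈ Finset.Icc 1 m, lam l * (dig p r l : ZMod q) + lam 0
  + (((q / p) * (∑ β ∈ Finset.Icc 1 k, dig p σ β * dig p r (pmap β 1)
      + ∑ β ∈ Finset.Icc 1 k, dig p t β * dig p r (pmap β (mcard β))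
      + ∑ β ∈ Finset.Icc 1 δ, dig p t (k + β) * dig p r (m - δ + β)) : ℕ) : ZMod q)

section Digits

variable {p : ℕ}

theorem dig_lt (hp : 0 < p) (r l : ℕ) : dig p r l < p := Nat.mod_lt _ hp

theorem dig_eq_of_mod_pow_eq {a b l L : ℕ} (hl : 1 ≤ l) (hlL : l ≤ L)
    (h : a % p ^ L = b % p ^ L) : dig p a l = dig p b l := by
  have hpow : p ^ l = p ^ (l - 1) * p := by rw [← pow_succ, Nat.sub_add_cancel hl]
  have hdvd : p ^ l ∣ p ^ L := pow_dvd_pow p hlL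
  simp only [dig, ← Nat.mod_mul_right_div_self, ← hpow, ← Nat.mod_mod_of_dvd a hdvd, h,
    Nat.mod_mod_of_dvd b hdvd]

theorem dig_eq_of_div_pow_eq {a b l L : ℕ} (hLl : L < l) (h : a / p ^ L = b / p ^ L) :
    dig p a l = dig p b l := by
  have hpow : p ^ (l - 1) = p ^ L * p ^ (l - 1 - L) := by rw [← pow_add]; congr 1; omega
  simp only [dig, hpow, ← Nat.div_div_eq_div_mul, h]

theorem mod_pow_eq_of_dig_eq {a b L : ℕ} (h : ∀ l ∈ Icc 1 L, dig p a l = dig p b l) :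
    a % p ^ L = b % p ^ L := by
  induction L with
  | zero => simp [Nat.mod_one]
  | succ L ih =>
    have hL := h (L + 1) (by simp)
    simp only [dig, Nat.add_sub_cancel] at hL
    rw [Nat.mod_pow_succ, Nat.mod_pow_succ, hL,
      ih fun l hl => h l (Icc_subset_Icc_right L.le_succ hl)]

theorem mod_add_pow_mul_dig_add (u n : ℕ) (hu : 1 ≤ u) :
    n % p ^ (u - 1) + p ^ (u - 1) * (dig p n u + p * (n / p ^ u)) = n := by
  have hpow : p ^ u = p ^ (u - 1) * p := by rw [← pow_succ, Nat.sub_add_cancel hu]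
  rw [dig, hpow, ← Nat.div_div_eq_div_mul, Nat.mod_add_div, Nat.mod_add_div]

section Split

variable {u A c B : ℕ} (hu : 1 ≤ u) (hA : A < p ^ (u - 1)) (hc : c < p)
include hA

theorem add_pow_mul_add_mod :
    (A + p ^ (u - 1) * (c + p * B)) % p ^ (u - 1) = A := by
  rw [Nat.add_mul_mod_self_left, Nat.mod_eq_of_lt hA]

theorem add_pow_mul_add_div :
    (A + p ^ (u - 1) * (c + p * B)) / p ^ (u - 1) = c + p * B := by
  rw [Nat.add_mul_div_left _ _ (Nat.pos_of_ne_zero (by rintro h; simp [h] at hA)),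
    Nat.div_eq_of_lt hA, zero_add]

include hc

theorem dig_add_pow_mul_add : dig p (A + p ^ (u - 1) * (c + p * B)) u = c := by
  rw [dig, add_pow_mul_add_div hA, Nat.add_mul_mod_self_left, Nat.mod_eq_of_lt hc]

include hu in
theorem add_pow_mul_add_div_pow : (A + p ^ (u - 1) * (c + p * B)) / p ^ u = B := by
  have hpow : p ^ u = p ^ (u - 1) * p := by rw [← pow_succ, Nat.sub_add_cancel hu]
  rw [hpow, ← Nat.div_div_eq_div_mul, add_pow_mul_add_div hA,
    Nat.add_mul_div_left _ _ (by omega), Nat.div_eq_of_lt hc, zero_add]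

end Split

/-- `n` with its `u`-th digit `r_u` replaced by `r_u + 1 mod p`. -/
def incDigit (p u n : ℕ) : ℕ :=
  n % p ^ (u - 1) + p ^ (u - 1) * ((dig p n u + 1) % p + p * (n / p ^ u))

variable {u n : ℕ} (hp : 0 < p) (hu : 1 ≤ u)
include hp hu

omit hu in
theorem dig_incDigit_self : dig p (incDigit p u n) u = (dig p n u + 1) % p :=
  dig_add_pow_mul_add (Nat.mod_lt _ (by positivity)) (Nat.mod_lt _ hp)

theorem dig_incDigit_of_ne {l : ℕ} (hl : 1 ≤ l) (hlu : l ≠ u) :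
    dig p (incDigit p u n) l = dig p n l := by
  have hA : n % p ^ (u - 1) < p ^ (u - 1) := Nat.mod_lt _ (by positivity)
  rcases lt_or_gt_of_ne hlu with h | h
  · exact dig_eq_of_mod_pow_eq hl (by omega) (add_pow_mul_add_mod hA)
  · exact dig_eq_of_div_pow_eq h (add_pow_mul_add_div_pow hu hA (Nat.mod_lt _ hp))

theorem incDigit_lt {L : ℕ} (huL : u ≤ L) (hn : n < p ^ L) : incDigit p u n < p ^ L := by
  have hpow : p ^ L = p ^ (L - u) * p ^ u := by rw [← pow_add, Nat.sub_add_cancel huL]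
  rw [hpow, ← Nat.div_lt_iff_lt_mul (by positivity), incDigit,
    add_pow_mul_add_div_pow hu (Nat.mod_lt _ (by positivity)) (Nat.mod_lt _ hp),
    Nat.div_lt_iff_lt_mul (by positivity), ← hpow]
  exact hn

omit hp in
theorem incDigit_cast : (incDigit p u n : ℤ) =
    n + (((dig p n u + 1) % p : ℕ) - dig p n u) * (p : ℤ) ^ (u - 1) := by
  have h : ((n % p ^ (u - 1) + p ^ (u - 1) * (dig p n u + p * (n / p ^ u)) : ℕ) : ℤ) = n := by
    rw [mod_add_pow_mul_dig_add u n hu]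
  rw [incDigit]
  push_cast at h ⊢
  linear_combination h

omit hp in
theorem incDigit_add {a : ℕ} (h : dig p (n + a) u = dig p n u) :
    incDigit p u (n + a) = incDigit p u n + a := by
  zify
  rw [incDigit_cast hu, incDigit_cast hu, h]
  push_cast
  ring

theorem incDigit_injective : Function.Injective (incDigit p u) := by
  intro n n' h
  have hdig : dig p n u = dig p n' u := by
    have h' := congrArg (dig p · u) h
    simp only [dig_incDigit_self hp] at h'
    have := Nat.ModEq.add_right_cancel' 1 h'
    rwa [Nat.ModEq, Nat.mod_eq_of_lt (dig_lt hp _ _), Nat.mod_eq_of_lt (dig_lt hp _ _)] at this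
  have hcast := congrArg (fun x : ℕ => (x : ℤ)) h
  simp only [incDigit_cast hu, hdig] at hcast
  exact_mod_cast add_right_cancel hcast

end Digits

theorem eomega_eq_stdAddChar {q : ℕ} [NeZero q] (x : ZMod q) :
    eomega q x = ZMod.stdAddChar x := by
  rw [ZMod.stdAddChar_apply, ZMod.toCircle_apply, eomega]

section Scale

variable {p q : ℕ} (hpq : p ∣ q)
include hpq

theorem natCast_div_mul_self : ((q / p : ℕ) : ZMod q) * p = 0 := by
  rw [← Nat.cast_mul, Nat.div_mul_cancel hpq, ZMod.natCast_self]

theorem natCast_div_mul_mod (n : ℕ) :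
    ((q / p : ℕ) : ZMod q) * ((n % p : ℕ) : ZMod q) = ((q / p : ℕ) : ZMod q) * n := by
  conv_rhs => rw [← Nat.mod_add_div n p]
  push_cast
  linear_combination -((n / p : ℕ) : ZMod q) * natCast_div_mul_self hpq

theorem natCast_div_mul_sub_ne_zero (hq : q ≠ 0) {a b : ℕ} (ha : a < p) (hb : b < p)
    (hab : a ≠ b) : ((q / p : ℕ) : ZMod q) * ((a : ZMod q) - b) ≠ 0 := by
  have hqp : 0 < q / p := Nat.div_pos (Nat.le_of_dvd (Nat.pos_of_ne_zero hq) hpq)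
    (Nat.pos_of_dvd_of_pos hpq (Nat.pos_of_ne_zero hq))
  have hlt : ∀ c < p, q / p * c < q := fun c hc =>
    (Nat.mul_lt_mul_of_pos_left hc hqp).trans_eq (Nat.div_mul_cancel hpq)
  rw [mul_sub, sub_ne_zero, ← Nat.cast_mul, ← Nat.cast_mul, Ne,
    ZMod.natCast_eq_natCast_iff' _ _ q, Nat.mod_eq_of_lt (hlt a ha), Nat.mod_eq_of_lt (hlt b hb)]
  exact fun h => hab (Nat.eq_of_mul_eq_mul_left hqp h)

end Scale

theorem Finset.sum_comp_eq_of_mapsTo_injOn {α M : Type*} [AddCommMonoid M] {T : Finset α}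
    {ρ : α → α} (hmaps : Set.MapsTo ρ T T) (hinj : Set.InjOn ρ T) (F : α → M) :
    ∑ z ∈ T, F (ρ z) = ∑ z ∈ T, F z :=
  Finset.sum_nbij ρ hmaps hinj (Finset.surjOn_of_injOn_of_card_le ρ hmaps hinj le_rfl)
    fun _ _ => rfl

/-- `ρ` permutes each level set of `c`, and rescales its sum by the factor `c ≠ 1`. -/
theorem Finset.sum_eq_zero_of_map_eq_mul {α K : Type*} [CommRing K] [NoZeroDivisors K]
    {T : Finset α} {ρ : α → α} (hmaps : Set.MapsTo ρ T T) (hinj : Set.InjOn ρ T)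
    {F c : α → K} (hF : ∀ z ∈ T, F (ρ z) = c z * F z) (hc : ∀ z ∈ T, c (ρ z) = c z)
    (hc1 : ∀ z ∈ T, c z ≠ 1) : ∑ z ∈ T, F z = 0 := by
  classical
  rw [← Finset.sum_fiberwise_of_maps_to (fun z hz => Finset.mem_image_of_mem c hz)]
  refine Finset.sum_eq_zero fun a ha => ?_
  obtain ⟨z₀, hz₀, rfl⟩ := Finset.mem_image.mp ha
  set S := T.filter fun z => c z = c z₀
  have hmapsS : Set.MapsTo ρ S S := fun z hz => by
    simp only [S, Finset.mem_coe, Finset.mem_filter] at hz ⊢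
    exact ⟨hmaps hz.1, (hc z hz.1).trans hz.2⟩
  have hfix : ∑ z ∈ S, F z = c z₀ * ∑ z ∈ S, F z := by
    conv_lhs => rw [← Finset.sum_comp_eq_of_mapsTo_injOn hmapsS
      (hinj.mono fun z hz => (Finset.mem_filter.mp hz).1)]
    rw [Finset.mul_sum]
    refine Finset.sum_congr rfl fun z hz => ?_
    rw [Finset.mem_filter] at hz
    rw [hF z hz.1, hz.2]
  have : (1 - c z₀) * ∑ z ∈ S, F z = 0 := by linear_combination hfix
  exact (mul_eq_zero.mp this).resolve_left (sub_ne_zero.mpr (hc1 z₀ hz₀).symm)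

/-- `pmap β` is the bijection `π_β : {1, …, mcard β} → S_β` of a partition `S_1, …, S_k` of
`{1, …, n}`. -/
structure IsChainPartition (n k : ℕ) (mcard : ℕ → ℕ) (pmap : ℕ → ℕ → ℕ) : Prop where
  mem_Icc : ∀ β ∈ Icc 1 k, ∀ γ ∈ Icc 1 (mcard β), pmap β γ ∈ Icc 1 n
  existsUnique : ∀ l ∈ Icc 1 n, ∃! bg : ℕ × ℕ,
    bg.1 ∈ Icc 1 k ∧ bg.2 ∈ Icc 1 (mcard bg.1) ∧ pmap bg.1 bg.2 = l

namespace IsChainPartition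

variable {n k : ℕ} {mcard : ℕ → ℕ} {pmap : ℕ → ℕ → ℕ} (hP : IsChainPartition n k mcard pmap)
include hP

theorem eq_of_pmap_eq {β γ β' γ' : ℕ} (hβ : β ∈ Icc 1 k) (hγ : γ ∈ Icc 1 (mcard β))
    (hβ' : β' ∈ Icc 1 k) (hγ' : γ' ∈ Icc 1 (mcard β')) (h : pmap β γ = pmap β' γ') :
    β = β' ∧ γ = γ' := by
  obtain ⟨_, -, huniq⟩ := hP.existsUnique _ (hP.mem_Icc β hβ γ hγ)
  exact Prod.ext_iff.mp
    ((huniq (β, γ) ⟨hβ, hγ, rfl⟩).trans (huniq (β', γ') ⟨hβ', hγ', h.symm⟩).symm)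

theorem exists_pmap_eq {l : ℕ} (hl : l ∈ Icc 1 n) :
    ∃ β ∈ Icc 1 k, ∃ γ ∈ Icc 1 (mcard β), pmap β γ = l := by
  obtain ⟨⟨β, γ⟩, ⟨hβ, hγ, h⟩, -⟩ := hP.existsUnique l hl
  exact ⟨β, hβ, γ, hγ, h⟩

end IsChainPartition

def digitDiff (p n i j : ℕ) : Finset ℕ := {l ∈ Icc 1 n | dig p i l ≠ dig p j l}

theorem digitDiff_subset (p n i j : ℕ) : digitDiff p n i j ⊆ Icc 1 n := filter_subset _ _

theorem digitDiff_add_nonempty {p n a : ℕ} (i : ℕ) (ha : ¬ p ^ n ∣ a) :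
    (digitDiff p n i (i + a)).Nonempty := by
  by_contra h
  refine ha ((Nat.modEq_zero_iff_dvd).mp (Nat.ModEq.add_left_cancel' i ?_))
  rw [add_zero]
  refine (mod_pow_eq_of_dig_eq fun l hl => ?_).symm
  by_contra hne
  exact h ⟨l, (mem_filter.mpr ⟨hl, hne⟩ : l ∈ digitDiff p n i (i + a))⟩

section FirstDifference

variable (k : ℕ) (mcard : ℕ → ℕ) (pmap : ℕ → ℕ → ℕ) (D : Finset ℕ)

noncomputable def firstChain : ℕ :=
  sInf {β | β ∈ Icc 1 k ∧ ∃ γ ∈ Icc 1 (mcard β), pmap β γ ∈ D}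

noncomputable def firstLink : ℕ :=
  sInf {γ | γ ∈ Icc 1 (mcard (firstChain k mcard pmap D)) ∧ pmap (firstChain k mcard pmap D) γ ∈ D}

noncomputable def firstPos : ℕ :=
  pmap (firstChain k mcard pmap D) (firstLink k mcard pmap D)

noncomputable def prevPos : ℕ :=
  pmap (firstChain k mcard pmap D) (firstLink k mcard pmap D - 1)

variable {k mcard pmap D} {n : ℕ} (hP : IsChainPartition n k mcard pmap)
  (hD : D ⊆ Icc 1 n) (hne : D.Nonempty)
include hP hD hne

theorem firstChain_mem_Icc : firstChain k mcard pmap D ∈ Icc 1 k ∧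
    ∃ γ ∈ Icc 1 (mcard (firstChain k mcard pmap D)), pmap (firstChain k mcard pmap D) γ ∈ D := by
  obtain ⟨l, hl⟩ := hne
  obtain ⟨β, hβ, γ, hγ, rfl⟩ := hP.exists_pmap_eq (hD hl)
  exact Nat.sInf_mem (s := {β | β ∈ Icc 1 k ∧ ∃ γ ∈ Icc 1 (mcard β), pmap β γ ∈ D})
    ⟨β, hβ, γ, hγ, hl⟩

theorem firstLink_mem_Icc : firstLink k mcard pmap D ∈ Icc 1 (mcard (firstChain k mcard pmap D)) ∧
    pmap (firstChain k mcard pmap D) (firstLink k mcard pmap D) ∈ D :=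
  Nat.sInf_mem (firstChain_mem_Icc hP hD hne).2

theorem firstPos_mem : firstPos k mcard pmap D ∈ D := (firstLink_mem_Icc hP hD hne).2

theorem notMem_of_lt_firstLink {γ : ℕ} (hγ : γ ∈ Icc 1 (firstLink k mcard pmap D - 1)) :
    pmap (firstChain k mcard pmap D) γ ∉ D := fun h => by
  have hlink := mem_Icc.mp (firstLink_mem_Icc hP hD hne).1
  simp only [mem_Icc] at hγ
  have : firstLink k mcard pmap D ≤ γ := Nat.sInf_le ⟨mem_Icc.mpr ⟨hγ.1, by omega⟩, h⟩
  omega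

variable (h1 : firstLink k mcard pmap D ≠ 1)
include h1

theorem prevPos_mem_Icc : prevPos k mcard pmap D ∈ Icc 1 n := by
  have hβ := (firstChain_mem_Icc hP hD hne).1
  have hγ := (mem_Icc.mp (firstLink_mem_Icc hP hD hne).1)
  exact hP.mem_Icc _ hβ _ (mem_Icc.mpr ⟨by omega, by omega⟩)

theorem prevPos_notMem : prevPos k mcard pmap D ∉ D :=
  notMem_of_lt_firstLink hP hD hne <| mem_Icc.mpr
    ⟨by have := (mem_Icc.mp (firstLink_mem_Icc hP hD hne).1).1; omega, le_rfl⟩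

theorem prevPos_ne_firstPos : prevPos k mcard pmap D ≠ firstPos k mcard pmap D :=
  fun h => prevPos_notMem hP hD hne h1 (h ▸ firstPos_mem hP hD hne)

end FirstDifference

theorem dig_eq_of_lt_firstLink {p n k i j γ : ℕ} {mcard : ℕ → ℕ} {pmap : ℕ → ℕ → ℕ}
    (hP : IsChainPartition n k mcard pmap) (hne : (digitDiff p n i j).Nonempty)
    (hγ : γ ∈ Icc 1 (firstLink k mcard pmap (digitDiff p n i j) - 1)) :
    dig p i (pmap (firstChain k mcard pmap (digitDiff p n i j)) γ)
      = dig p j (pmap (firstChain k mcard pmap (digitDiff p n i j)) γ) := by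
  have hβ := (firstChain_mem_Icc hP (digitDiff_subset _ _ _ _) hne).1
  have hγ' := mem_Icc.mp (firstLink_mem_Icc hP (digitDiff_subset _ _ _ _) hne).1
  have hmem := hP.mem_Icc _ hβ γ (by simp only [mem_Icc] at hγ ⊢; omega)
  have := notMem_of_lt_firstLink hP (digitDiff_subset _ _ _ _) hne hγ
  simp only [digitDiff, mem_filter, not_and, not_not] at this
  exact this hmem

theorem Finset.sum_sub_sum_eq_of_eq_of_ne {ι R : Type*} [AddCommGroup R] {s : Finset ι}
    {f g : ι → R} {a : ι} (ha : a ∈ s) (h : ∀ x ∈ s, x ≠ a → f x = g x) :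
    ∑ x ∈ s, f x - ∑ x ∈ s, g x = f a - g a := by
  rw [← Finset.sum_sub_distrib]
  exact Finset.sum_eq_single_of_mem a ha fun x hx hxa => by rw [h x hx hxa, sub_self]

theorem Finset.sum_mul_sub_sum_mul_eq {ι R : Type*} [CommRing R] (s : Finset ι) (w : ι → R)
    (pos : ι → ℕ) {x y x' y' : ℕ → R} (h : ∀ l, x' l - y' l = x l - y l) :
    ∑ a ∈ s, w a * x' (pos a) - ∑ a ∈ s, w a * y' (pos a)
      = ∑ a ∈ s, w a * x (pos a) - ∑ a ∈ s, w a * y (pos a) := by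
  simp only [← Finset.sum_sub_distrib, ← mul_sub, h]

section ChainSum

variable {R : Type*} [CommRing R] (k : ℕ) (mcard : ℕ → ℕ) (pmap : ℕ → ℕ → ℕ)

def chainSum (x : ℕ → R) : R :=
  ∑ β ∈ Icc 1 k, ∑ γ ∈ Icc 1 (mcard β - 1), x (pmap β γ) * x (pmap β (γ + 1))

variable {k mcard pmap}

/-- Only the two chain neighbours of `u = π_β(γ - 1)` see the change at `u`; the one before `u`
contributes nothing because `x` and `y` agree there. -/
theorem chainSum_sub_chainSum_of_update {n β₀ γ₀ : ℕ} (hP : IsChainPartition n k mcard pmap)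
    (hβ₀ : β₀ ∈ Icc 1 k) (hγ₀ : γ₀ ∈ Icc 2 (mcard β₀)) {x y x' y' : ℕ → R}
    (hx : ∀ l ∈ Icc 1 n, l ≠ pmap β₀ (γ₀ - 1) → x' l = x l)
    (hy : ∀ l ∈ Icc 1 n, l ≠ pmap β₀ (γ₀ - 1) → y' l = y l)
    (hu : x' (pmap β₀ (γ₀ - 1)) = y' (pmap β₀ (γ₀ - 1)))
    (hprev : ∀ γ ∈ Icc 1 (γ₀ - 1), x (pmap β₀ γ) = y (pmap β₀ γ)) :
    (chainSum k mcard pmap x' - chainSum k mcard pmap y')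
        - (chainSum k mcard pmap x - chainSum k mcard pmap y)
      = (x' (pmap β₀ (γ₀ - 1)) - x (pmap β₀ (γ₀ - 1)))
        * (x (pmap β₀ γ₀) - y (pmap β₀ γ₀)) := by
  obtain ⟨hγ₀2, hγ₀m⟩ := mem_Icc.mp hγ₀
  have hγu : γ₀ - 1 ∈ Icc 1 (mcard β₀) := mem_Icc.mpr ⟨by omega, by omega⟩
  have hoff : ∀ β ∈ Icc 1 k, ∀ γ ∈ Icc 1 (mcard β), (β, γ) ≠ (β₀, γ₀ - 1) →
      x' (pmap β γ) = x (pmap β γ) ∧ y' (pmap β γ) = y (pmap β γ) := by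
    intro β hβ γ hγ hne
    have hl := hP.mem_Icc β hβ γ hγ
    have hlu : pmap β γ ≠ pmap β₀ (γ₀ - 1) := fun h => hne <| Prod.ext_iff.mpr <|
      hP.eq_of_pmap_eq hβ hγ hβ₀ hγu h
    exact ⟨hx _ hl hlu, hy _ hl hlu⟩
  have hsucc : ∀ β ∈ Icc 1 k, ∀ γ ∈ Icc 1 (mcard β - 1),
      γ ∈ Icc 1 (mcard β) ∧ γ + 1 ∈ Icc 1 (mcard β) := fun β _ γ hγ => by
    simp only [mem_Icc] at hγ ⊢; omega
  simp only [chainSum, ← Finset.sum_sub_distrib]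
  rw [Finset.sum_eq_single_of_mem β₀ hβ₀, Finset.sum_eq_single_of_mem (γ₀ - 1)]
  · obtain ⟨hvx, hvy⟩ := hoff β₀ hβ₀ γ₀ (mem_Icc.mpr ⟨by omega, hγ₀m⟩)
      (by simp only [ne_eq, Prod.mk.injEq, true_and]; omega)
    rw [Nat.sub_add_cancel (by omega), hvx, hvy, ← hu,
      hprev (γ₀ - 1) (mem_Icc.mpr ⟨by omega, le_rfl⟩)]
    ring
  · exact mem_Icc.mpr ⟨by omega, by omega⟩
  · intro γ hγ hne
    obtain ⟨hγ1, hγ2⟩ := hsucc β₀ hβ₀ γ hγ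
    obtain ⟨ha1, ha2⟩ := hoff β₀ hβ₀ γ hγ1 (by simpa using hne)
    rw [ha1, ha2]
    by_cases hb : γ + 1 = γ₀ - 1
    · rw [hb, ← hu, hprev γ (mem_Icc.mpr ⟨(mem_Icc.mp hγ1).1, by omega⟩),
        hprev (γ₀ - 1) (mem_Icc.mpr ⟨by omega, le_rfl⟩)]
      ring
    · obtain ⟨hb1, hb2⟩ := hoff β₀ hβ₀ (γ + 1) hγ2 (by simpa using hb)
      rw [hb1, hb2]
      ring
  · intro β hβ hne
    refine Finset.sum_eq_zero fun γ hγ => ?_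
    obtain ⟨hγ1, hγ2⟩ := hsucc β hβ γ hγ
    obtain ⟨ha1, ha2⟩ := hoff β hβ γ hγ1 (by simp [hne])
    obtain ⟨hb1, hb2⟩ := hoff β hβ (γ + 1) hγ2 (by simp [hne])
    rw [ha1, ha2, hb1, hb2]
    ring

end ChainSum

section IncDigitPair

variable {p u i j : ℕ} (hp : 0 < p) (hu : 1 ≤ u) (h : dig p i u = dig p j u)
include hp hu h

theorem dig_incDigit_eq_iff {l : ℕ} (hl : 1 ≤ l) :
    dig p (incDigit p u i) l = dig p (incDigit p u j) l ↔ dig p i l = dig p j l := by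
  rcases eq_or_ne l u with rfl | hlu
  · simp only [dig_incDigit_self hp, h]
  · rw [dig_incDigit_of_ne hp hu hl hlu, dig_incDigit_of_ne hp hu hl hlu]

theorem digitDiff_incDigit (n : ℕ) :
    digitDiff p n (incDigit p u i) (incDigit p u j) = digitDiff p n i j :=
  Finset.filter_congr fun l hl => by rw [ne_eq, dig_incDigit_eq_iff hp hu h (mem_Icc.mp hl).1]

theorem natCast_dig_incDigit_sub {R : Type*} [AddGroupWithOne R] (l : ℕ) :
    (dig p (incDigit p u i) l : R) - dig p (incDigit p u j) l = (dig p i l : R) - dig p j l := by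
  -- position `0` reads the same digit as position `1`
  have key : ∀ l, 1 ≤ l → (dig p (incDigit p u i) l : R) - dig p (incDigit p u j) l
      = (dig p i l : R) - dig p j l := fun l hl => by
    rcases eq_or_ne l u with rfl | hlu
    · rw [dig_incDigit_self hp, dig_incDigit_self hp, h, sub_self, sub_self]
    · rw [dig_incDigit_of_ne hp hu hl hlu, dig_incDigit_of_ne hp hu hl hlu]
  rcases Nat.eq_zero_or_pos l with rfl | hl
  · exact key 1 le_rfl
  · exact key l hl

end IncDigitPair

section Aseq

variable {p q m δ k : ℕ} {mcard : ℕ → ℕ} {pmap : ℕ → ℕ → ℕ} {lam : ℕ → ZMod q} {t : ℕ}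
  (hp : 0 < p) (hpq : p ∣ q)
include hp hpq

theorem aseq_sub_aseq_incDigit_seqIndex {β₀ : ℕ} (hβ₀ : β₀ ∈ Icc 1 k) (σ i j : ℕ) :
    aseq p q m δ k mcard pmap lam t (incDigit p β₀ σ) i
        - aseq p q m δ k mcard pmap lam t (incDigit p β₀ σ) j
      = aseq p q m δ k mcard pmap lam t σ i - aseq p q m δ k mcard pmap lam t σ j
        + ((q / p : ℕ) : ZMod q) * ((dig p i (pmap β₀ 1) : ZMod q) - dig p j (pmap β₀ 1)) := by
  have hseed : ∀ r : ℕ,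
      ∑ β ∈ Icc 1 k, (dig p (incDigit p β₀ σ) β : ZMod q) * dig p r (pmap β 1)
        - ∑ β ∈ Icc 1 k, (dig p σ β : ZMod q) * dig p r (pmap β 1)
      = ((dig p (incDigit p β₀ σ) β₀ : ZMod q) - dig p σ β₀) * dig p r (pmap β₀ 1) := by
    intro r
    rw [Finset.sum_sub_sum_eq_of_eq_of_ne hβ₀ fun β hβ hne => by
      rw [dig_incDigit_of_ne hp (mem_Icc.mp hβ₀).1 (mem_Icc.mp hβ).1 hne], sub_mul]
  have hinc : ((q / p : ℕ) : ZMod q) * (dig p (incDigit p β₀ σ) β₀ : ZMod q)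
      = ((q / p : ℕ) : ZMod q) * dig p σ β₀ + ((q / p : ℕ) : ZMod q) := by
    rw [dig_incDigit_self hp, natCast_div_mul_mod hpq]
    push_cast
    ring
  simp only [aseq]
  push_cast
  linear_combination ((q / p : ℕ) : ZMod q) * (hseed i - hseed j)
    + hinc * ((dig p i (pmap β₀ 1) : ZMod q) - dig p j (pmap β₀ 1))

theorem aseq_sub_aseq_incDigit_entryIndex {n β₀ γ₀ : ℕ} (hP : IsChainPartition n k mcard pmap)
    (hβ₀ : β₀ ∈ Icc 1 k) (hγ₀ : γ₀ ∈ Icc 2 (mcard β₀)) {i j : ℕ}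
    (hprev : ∀ γ ∈ Icc 1 (γ₀ - 1), dig p i (pmap β₀ γ) = dig p j (pmap β₀ γ)) (σ : ℕ) :
    aseq p q m δ k mcard pmap lam t σ (incDigit p (pmap β₀ (γ₀ - 1)) i)
        - aseq p q m δ k mcard pmap lam t σ (incDigit p (pmap β₀ (γ₀ - 1)) j)
      = aseq p q m δ k mcard pmap lam t σ i - aseq p q m δ k mcard pmap lam t σ j
        + ((q / p : ℕ) : ZMod q)
          * ((dig p i (pmap β₀ γ₀) : ZMod q) - dig p j (pmap β₀ γ₀)) := by
  set u := pmap β₀ (γ₀ - 1)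
  obtain ⟨hγ₀2, hγ₀m⟩ := mem_Icc.mp hγ₀
  have hu : 1 ≤ u := (mem_Icc.mp (hP.mem_Icc β₀ hβ₀ (γ₀ - 1) (mem_Icc.mpr ⟨by omega, by omega⟩))).1
  have huij : dig p i u = dig p j u := hprev (γ₀ - 1) (mem_Icc.mpr ⟨by omega, le_rfl⟩)
  have hdiff := natCast_dig_incDigit_sub (R := ZMod q) hp hu huij
  have hquad := chainSum_sub_chainSum_of_update hP hβ₀ hγ₀
    (x := fun l => (dig p i l : ZMod q)) (y := fun l => (dig p j l : ZMod q))
    (x' := fun l => (dig p (incDigit p u i) l : ZMod q))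
    (y' := fun l => (dig p (incDigit p u j) l : ZMod q))
    (fun l hl hlu => by rw [dig_incDigit_of_ne hp hu (mem_Icc.mp hl).1 hlu])
    (fun l hl hlu => by rw [dig_incDigit_of_ne hp hu (mem_Icc.mp hl).1 hlu])
    (by rw [dig_incDigit_self hp, dig_incDigit_self hp, huij])
    (fun γ hγ => by rw [hprev γ hγ])
  have hlin := fun (ι : Type) (s : Finset ι) (w : ι → ZMod q) (pos : ι → ℕ) =>
    Finset.sum_mul_sub_sum_mul_eq s w pos hdiff
  have hinc : ((q / p : ℕ) : ZMod q) * (dig p (incDigit p u i) u : ZMod q)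
      = ((q / p : ℕ) : ZMod q) * dig p i u + ((q / p : ℕ) : ZMod q) := by
    rw [dig_incDigit_self hp, natCast_div_mul_mod hpq]
    push_cast
    ring
  simp only [chainSum] at hquad
  simp only [aseq]
  push_cast
  linear_combination ((q / p : ℕ) : ZMod q) * hquad
    + hlin ℕ (Icc 1 m) lam (fun l => l)
    + ((q / p : ℕ) : ZMod q) * hlin ℕ (Icc 1 k) (fun β => (dig p σ β : ZMod q)) (pmap · 1)
    + ((q / p : ℕ) : ZMod q) * hlin ℕ (Icc 1 k) (fun β => (dig p t β : ZMod q))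
        (fun β => pmap β (mcard β))
    + ((q / p : ℕ) : ZMod q) * hlin ℕ (Icc 1 δ) (fun β => (dig p t (k + β) : ZMod q))
        (m - δ + ·)
    + hinc * ((dig p i (pmap β₀ γ₀) : ZMod q) - dig p j (pmap β₀ γ₀))

end Aseq

section Bump

variable (p n k τ : ℕ) (mcard : ℕ → ℕ) (pmap : ℕ → ℕ → ℕ)

noncomputable def bumpAt (D : Finset ℕ) (z : ℕ × ℕ) : ℕ × ℕ :=
  if firstLink k mcard pmap D = 1 then (incDigit p (firstChain k mcard pmap D) z.1, z.2)
  else (z.1, incDigit p (prevPos k mcard pmap D) z.2)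

noncomputable def bump (z : ℕ × ℕ) : ℕ × ℕ :=
  bumpAt p k mcard pmap (digitDiff p n z.2 (z.2 + τ)) z

variable {p n k τ mcard pmap} (hp : 0 < p) (hP : IsChainPartition n k mcard pmap)

include hp hP

theorem bumpAt_injective {D : Finset ℕ} (hD : D ⊆ Icc 1 n) (hne : D.Nonempty) :
    Function.Injective (bumpAt p k mcard pmap D) := by
  intro z z' h
  unfold bumpAt at h
  split_ifs at h with h1
  · obtain ⟨h₁, h₂⟩ := Prod.mk.inj h
    exact Prod.ext
      (incDigit_injective hp (mem_Icc.mp (firstChain_mem_Icc hP hD hne).1).1 h₁) h₂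
  · obtain ⟨h₁, h₂⟩ := Prod.mk.inj h
    exact Prod.ext h₁ (incDigit_injective hp (mem_Icc.mp (prevPos_mem_Icc hP hD hne h1)).1 h₂)

variable (hτ : ¬ p ^ n ∣ τ) (z : ℕ × ℕ)
include hτ

omit hp in
theorem dig_prevPos_eq
    (h1 : firstLink k mcard pmap (digitDiff p n z.2 (z.2 + τ)) ≠ 1) :
    dig p z.2 (prevPos k mcard pmap (digitDiff p n z.2 (z.2 + τ)))
      = dig p (z.2 + τ) (prevPos k mcard pmap (digitDiff p n z.2 (z.2 + τ))) := by
  have hne := digitDiff_add_nonempty z.2 hτ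
  have hγ := (mem_Icc.mp (firstLink_mem_Icc hP (digitDiff_subset _ _ _ _) hne).1).1
  exact dig_eq_of_lt_firstLink hP hne (mem_Icc.mpr ⟨by omega, le_rfl⟩)

omit hp in
theorem bump_snd_add
    (h1 : firstLink k mcard pmap (digitDiff p n z.2 (z.2 + τ)) ≠ 1) :
    (bump p n k τ mcard pmap z).2 + τ
      = incDigit p (prevPos k mcard pmap (digitDiff p n z.2 (z.2 + τ))) (z.2 + τ) := by
  simp only [bump, bumpAt, if_neg h1]
  exact (incDigit_add (mem_Icc.mp (prevPos_mem_Icc hP (digitDiff_subset _ _ _ _)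
    (digitDiff_add_nonempty z.2 hτ) h1)).1 (dig_prevPos_eq hP hτ z h1).symm).symm

theorem digitDiff_bump :
    digitDiff p n (bump p n k τ mcard pmap z).2 ((bump p n k τ mcard pmap z).2 + τ)
      = digitDiff p n z.2 (z.2 + τ) := by
  by_cases h1 : firstLink k mcard pmap (digitDiff p n z.2 (z.2 + τ)) = 1
  · simp only [bump, bumpAt, if_pos h1]
  · rw [bump_snd_add hP hτ z h1]
    simp only [bump, bumpAt, if_neg h1]
    exact digitDiff_incDigit hp (mem_Icc.mp (prevPos_mem_Icc hP (digitDiff_subset _ _ _ _)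
      (digitDiff_add_nonempty z.2 hτ) h1)).1 (dig_prevPos_eq hP hτ z h1) n

theorem dig_bump_firstPos :
    dig p (bump p n k τ mcard pmap z).2 (firstPos k mcard pmap (digitDiff p n z.2 (z.2 + τ)))
        = dig p z.2 (firstPos k mcard pmap (digitDiff p n z.2 (z.2 + τ))) ∧
      dig p ((bump p n k τ mcard pmap z).2 + τ)
          (firstPos k mcard pmap (digitDiff p n z.2 (z.2 + τ)))
        = dig p (z.2 + τ) (firstPos k mcard pmap (digitDiff p n z.2 (z.2 + τ))) := by
  by_cases h1 : firstLink k mcard pmap (digitDiff p n z.2 (z.2 + τ)) = 1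
  · simp only [bump, bumpAt, if_pos h1, and_self]
  · have hne := digitDiff_add_nonempty z.2 hτ
    have hu := (mem_Icc.mp (prevPos_mem_Icc hP (digitDiff_subset _ _ _ _) hne h1)).1
    have hv := (mem_Icc.mp (digitDiff_subset _ _ _ _
      (firstPos_mem hP (digitDiff_subset _ _ _ _) hne))).1
    have hvu := (prevPos_ne_firstPos hP (digitDiff_subset _ _ _ _) hne h1).symm
    rw [bump_snd_add hP hτ z h1]
    simp only [bump, bumpAt, if_neg h1]
    exact ⟨dig_incDigit_of_ne hp hu hv hvu, dig_incDigit_of_ne hp hu hv hvu⟩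

theorem bump_injective : Function.Injective (bump p n k τ mcard pmap) := by
  intro z z' h
  have hD : digitDiff p n z'.2 (z'.2 + τ) = digitDiff p n z.2 (z.2 + τ) := by
    rw [← digitDiff_bump hp hP hτ z, ← digitDiff_bump hp hP hτ z', h]
  unfold bump at h
  rw [hD] at h
  exact bumpAt_injective hp hP (digitDiff_subset _ _ _ _) (digitDiff_add_nonempty z.2 hτ) h

theorem bump_mem_product {m : ℕ} (hnm : n ≤ m)
    (hz : z ∈ range (p ^ k) ×ˢ range (p ^ m - τ)) :
    bump p n k τ mcard pmap z ∈ range (p ^ k) ×ˢ range (p ^ m - τ) := by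
  simp only [mem_product, mem_range] at hz ⊢
  have hne := digitDiff_add_nonempty z.2 hτ
  by_cases h1 : firstLink k mcard pmap (digitDiff p n z.2 (z.2 + τ)) = 1
  · simp only [bump, bumpAt, if_pos h1]
    obtain ⟨hβ1, hβk⟩ := mem_Icc.mp (firstChain_mem_Icc hP (digitDiff_subset _ _ _ _) hne).1
    exact ⟨incDigit_lt hp hβ1 hβk hz.1, hz.2⟩
  · have hsum := bump_snd_add hP hτ z h1
    obtain ⟨hu1, hun⟩ := mem_Icc.mp (prevPos_mem_Icc hP (digitDiff_subset _ _ _ _) hne h1)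
    have := incDigit_lt hp hu1 (hun.trans hnm) (show z.2 + τ < p ^ m by omega)
    simp only [bump, bumpAt, if_neg h1] at hsum ⊢
    omega

end Bump

def corrPhase (p q m δ k : ℕ) (mcard : ℕ → ℕ) (pmap : ℕ → ℕ → ℕ) (lam : ℕ → ZMod q) (t τ : ℕ)
    (z : ℕ × ℕ) : ZMod q :=
  aseq p q m δ k mcard pmap lam t z.1 z.2 - aseq p q m δ k mcard pmap lam t z.1 (z.2 + τ)

theorem corrPhase_bump {p q m δ k n τ : ℕ} {mcard : ℕ → ℕ} {pmap : ℕ → ℕ → ℕ} {lam : ℕ → ZMod q}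
    {t : ℕ} (hp : 0 < p) (hpq : p ∣ q) (hP : IsChainPartition n k mcard pmap)
    (hτ : ¬ p ^ n ∣ τ) (z : ℕ × ℕ) :
    corrPhase p q m δ k mcard pmap lam t τ (bump p n k τ mcard pmap z)
      = corrPhase p q m δ k mcard pmap lam t τ z + ((q / p : ℕ) : ZMod q)
        * ((dig p z.2 (firstPos k mcard pmap (digitDiff p n z.2 (z.2 + τ))) : ZMod q)
          - dig p (z.2 + τ) (firstPos k mcard pmap (digitDiff p n z.2 (z.2 + τ)))) := by
  have hne := digitDiff_add_nonempty z.2 hτ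
  have hβ := (firstChain_mem_Icc hP (digitDiff_subset _ _ _ _) hne).1
  have hγ := mem_Icc.mp (firstLink_mem_Icc hP (digitDiff_subset _ _ _ _) hne).1
  by_cases h1 : firstLink k mcard pmap (digitDiff p n z.2 (z.2 + τ)) = 1
  · simp only [corrPhase, bump, bumpAt, firstPos, h1]
    exact aseq_sub_aseq_incDigit_seqIndex hp hpq hβ z.1 z.2 (z.2 + τ)
  · rw [corrPhase, bump_snd_add hP hτ z h1]
    simp only [corrPhase, bump, bumpAt, if_neg h1, prevPos, firstPos]
    exact aseq_sub_aseq_incDigit_entryIndex hp hpq hP hβ (mem_Icc.mpr ⟨by omega, hγ.2⟩)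
      (fun γ hγ' => dig_eq_of_lt_firstLink hP hne hγ') z.1

theorem sum_eomega_corrPhase_eq_zero {p q m δ k τ : ℕ} {mcard : ℕ → ℕ} {pmap : ℕ → ℕ → ℕ}
    {lam : ℕ → ZMod q} {t : ℕ} (hp : 0 < p) (hq : q ≠ 0) (hpq : p ∣ q)
    (hP : IsChainPartition (m - δ) k mcard pmap) (hτ : ¬ p ^ (m - δ) ∣ τ) :
    ∑ z ∈ range (p ^ k) ×ˢ range (p ^ m - τ),
      eomega q (corrPhase p q m δ k mcard pmap lam t τ z) = 0 := by
  have : NeZero q := ⟨hq⟩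
  set D := fun z : ℕ × ℕ => digitDiff p (m - δ) z.2 (z.2 + τ)
  set step := fun z : ℕ × ℕ => ((q / p : ℕ) : ZMod q)
    * ((dig p z.2 (firstPos k mcard pmap (D z)) : ZMod q)
      - dig p (z.2 + τ) (firstPos k mcard pmap (D z)))
  simp only [eomega_eq_stdAddChar]
  refine Finset.sum_eq_zero_of_map_eq_mul (ρ := bump p (m - δ) k τ mcard pmap)
    (c := fun z => ZMod.stdAddChar (step z))
    (fun z hz => bump_mem_product hp hP hτ z (Nat.sub_le m δ) hz)
    (bump_injective hp hP hτ).injOn (fun z _ => ?_) (fun z _ => ?_) (fun z _ => ?_)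
  · rw [corrPhase_bump hp hpq hP hτ z, AddChar.map_add_eq_mul, mul_comm]
  · obtain ⟨h₁, h₂⟩ := dig_bump_firstPos hp hP hτ z
    simp only [step, D, digitDiff_bump hp hP hτ z, h₁, h₂]
  · have hv := firstPos_mem hP (digitDiff_subset _ _ _ _) (digitDiff_add_nonempty z.2 hτ)
    rw [Ne, ← AddChar.map_zero_eq_one (ZMod.stdAddChar (N := q)),
      ZMod.injective_stdAddChar.eq_iff]
    exact natCast_div_mul_sub_ne_zero hpq hq (dig_lt hp _ _) (dig_lt hp _ _)
      (mem_filter.mp hv).2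

theorem acorr_natCast (q N : ℕ) (u : ℕ → ZMod q) (n : ℕ) :
    acorr q N u n = ∑ i ∈ range (N - n), eomega q (u i - u (i + n)) := by
  simp [acorr, ccorr]

theorem acorr_neg_natCast {q : ℕ} [NeZero q] (N : ℕ) (u : ℕ → ZMod q) (n : ℕ) :
    acorr q N u (-n) = starRingEnd ℂ (acorr q N u n) := by
  rw [acorr_natCast, map_sum]
  simp only [eomega_eq_stdAddChar, ← AddChar.map_neg_eq_conj, neg_sub]
  rcases Nat.eq_zero_or_pos n with rfl | hn
  · simp [acorr, ccorr, eomega_eq_stdAddChar]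
  · have h : ¬ (0 : ℤ) ≤ -n := by omega
    simp only [acorr, ccorr, if_neg h, neg_neg, Int.toNat_natCast, eomega_eq_stdAddChar]

theorem not_dvd_of_bounds {a N M : ℕ} (hNM : N ∣ M)
    (h : (1 ≤ a ∧ a ≤ N - 1) ∨ (M - N + 1 ≤ a ∧ a ≤ M - 1)) : ¬ N ∣ a := by
  intro hd
  rcases h with ⟨h1, h2⟩ | ⟨h1, h2⟩
  · have := Nat.le_of_dvd (by omega) hd
    omega
  · have hNM' := Nat.le_of_dvd (by omega) hNM
    have := Nat.le_of_dvd (by omega) (Nat.dvd_sub hd (Nat.dvd_sub hNM dvd_rfl))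
    omega

theorem szccs_aacf_zero_general
    (p q m δ k : ℕ) (hp : p.Prime) (hq : 0 < q) (hpq : p ∣ q)
    (mcard : ℕ → ℕ) (pmap : ℕ → ℕ → ℕ) (lam : ℕ → ZMod q)
    (hmaps : ∀ β ∈ Finset.Icc 1 k, ∀ γ ∈ Finset.Icc 1 (mcard β),
      pmap β γ ∈ Finset.Icc 1 (m - δ))
    (hpart : ∀ l ∈ Finset.Icc 1 (m - δ), ∃! bg : ℕ × ℕ,
      bg.1 ∈ Finset.Icc 1 k ∧ bg.2 ∈ Finset.Icc 1 (mcard bg.1) ∧ pmap bg.1 bg.2 = l)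
    (t : ℕ) (τ : ℤ)
    (hτ : (1 ≤ τ.natAbs ∧ τ.natAbs ≤ p ^ (m - δ) - 1) ∨
      (p ^ m - p ^ (m - δ) + 1 ≤ τ.natAbs ∧ τ.natAbs ≤ p ^ m - 1)) :
    ∑ σ ∈ Finset.range (p ^ k),
      acorr q (p ^ m) (aseq p q m δ k mcard pmap lam t σ) τ = 0 := by
  have : NeZero q := ⟨hq.ne'⟩
  have key := sum_eomega_corrPhase_eq_zero (lam := lam) (t := t) hp.pos hq.ne' hpq ⟨hmaps, hpart⟩
    (not_dvd_of_bounds (pow_dvd_pow p (Nat.sub_le m δ)) hτ)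
  simp only [sum_product, corrPhase] at key
  obtain ⟨n, rfl | rfl⟩ := τ.eq_nat_or_neg
  · simpa only [acorr_natCast, Int.natAbs_natCast] using key
  · simp only [Int.natAbs_neg, Int.natAbs_natCast] at key
    simp only [acorr_neg_natCast, ← map_sum, acorr_natCast, key, map_zero]

/-- for every code index `t` and every shift `τ` with
`1 ≤ |τ| ≤ p^(m-δ)-1` or `p^m - p^(m-δ) + 1 ≤ |τ| ≤ p^m - 1`, the sum of the
aperiodic autocorrelations of the sequences `a^t_σ` (over `σ = 0,…,p^k-1`) vanishes. -/
theorem szccs_aacf_zero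
    (p q m δ k : ℕ) (hp : p.Prime) (hq : 0 < q) (hpq : p ∣ q)
    (hm : 3 ≤ m) (hδ : δ < m) (hk1 : 1 ≤ k) (hk2 : k ≤ m - δ)
    (mcard : ℕ → ℕ) (pmap : ℕ → ℕ → ℕ) (lam : ℕ → ZMod q)
    (hmcard : ∀ β ∈ Finset.Icc 1 k, 1 ≤ mcard β)
    (hmaps : ∀ β ∈ Finset.Icc 1 k, ∀ γ ∈ Finset.Icc 1 (mcard β),
      pmap β γ ∈ Finset.Icc 1 (m - δ))
    (hpart : ∀ l ∈ Finset.Icc 1 (m - δ), ∃! bg : ℕ × ℕ,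
      bg.1 ∈ Finset.Icc 1 k ∧ bg.2 ∈ Finset.Icc 1 (mcard bg.1) ∧ pmap bg.1 bg.2 = l)
    (t : ℕ) (ht : t < p ^ (k + δ)) (τ : ℤ)
    (hτ : (1 ≤ τ.natAbs ∧ τ.natAbs ≤ p ^ (m - δ) - 1) ∨
      (p ^ m - p ^ (m - δ) + 1 ≤ τ.natAbs ∧ τ.natAbs ≤ p ^ m - 1)) :
    ∑ σ ∈ Finset.range (p ^ k),
      acorr q (p ^ m) (aseq p q m δ k mcard pmap lam t σ) τ = 0 :=
  szccs_aacf_zero_general p q m δ k hp hq hpq mcard pmap lam hmaps hpart t τ hτ
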